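/- Let N ≥ 1, let Ω ⊆ ℝᴺ be a nonempty open set, let γ > 0, and let K : ℝᴺ × ℝᴺ → ℝ be measurable with K(x,y) ≥ 0 for a.e. (x,y) ∈ Ω × Ω. Define K₊ := {(x,y) ∈ Ω × Ω : K(x,y) > 0}. Suppose that for every measurable function w : ℝᴺ → ℝ, the vanishing of the (nonnegative) double integral ∫_{Ω×Ω} K(x,y)·|w(y)|^γ·|w(x)|² d(x,y) implies that w = 0 almost everywhere on Ω. Then for every x ∈ Ω and every ε > 0, the Lebesgue measure of (B_ε(x) × B_ε(x)) ∩ K₊ is strictly positive; in particular condition (K₂) holds (with any choice of ε > 0). -/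

import Mathlib

open MeasureTheory

/-! If `(B_ε(x) × B_ε(x)) ∩ K₊` were null, test the hypothesis on the indicator `w` of
`T = B_ε(x) ∩ Ω`: the integrand `K(x,y) |w(y)|^γ |w(x)|²` can only be nonzero on `(T × T) ∩ K₊`,
so the double integral vanishes, forcing `w = 0` a.e. on `Ω`, i.e. `|T| = 0`. But `T` is a
nonempty open set. -/

section

variable {α : Type*}

lemma support_ofReal_mul_abs_indicator_rpow_subset {γ : ℝ} (hγ : γ ≠ 0) (K : α × α → ℝ)
    (T : Set α) :
    Function.support (fun p : α × α =>
        ENNReal.ofReal (K p * |T.indicator 1 p.2| ^ γ * |T.indicator (1 : α → ℝ) p.1| ^ 2)) ⊆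
      T ×ˢ T ∩ {p | 0 < K p} := by
  intro p hp
  by_cases h1 : p.1 ∈ T
  · by_cases h2 : p.2 ∈ T
    · simp only [Function.mem_support, Set.indicator_of_mem h1, Set.indicator_of_mem h2,
        Pi.one_apply, abs_one, Real.one_rpow, one_pow, mul_one, ne_eq, ENNReal.ofReal_eq_zero,
        not_le] at hp
      exact ⟨⟨h1, h2⟩, hp⟩
    · -- `γ ≠ 0` is needed here: `Real.rpow` has `0 ^ 0 = 1`.
      simp [h2, Real.zero_rpow hγ] at hp
  · simp [h1] at hp

variable [MeasurableSpace α]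

lemma measure_eq_zero_of_ae_indicator_eq_zero {μ : Measure α} {Ω T : Set α} (hT : T ⊆ Ω)
    (h : ∀ᵐ x ∂μ, x ∈ Ω → T.indicator (1 : α → ℝ) x = 0) : μ T = 0 :=
  measure_mono_null (fun y hy => by simp [hy, hT hy]) h

lemma setLIntegral_eq_zero_of_measure_support_eq_zero {μ : Measure α} {s : Set α}
    {f : α → ENNReal} (hf : μ (Function.support f) = 0) : ∫⁻ x in s, f x ∂μ = 0 :=
  (lintegral_congr_ae (ae_restrict_of_ae (μ.measure_support_eq_zero_iff.1 hf))).trans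
    lintegral_zero

end

theorem stmt6_general (N : ℕ) (Ω : Set (EuclideanSpace ℝ (Fin N)))
    (hΩo : IsOpen Ω) (γ : ℝ) (hγ : 0 < γ)
    (K : EuclideanSpace ℝ (Fin N) × EuclideanSpace ℝ (Fin N) → ℝ)
    (hvan : ∀ w : EuclideanSpace ℝ (Fin N) → ℝ, Measurable w →
      (∫⁻ p in Ω ×ˢ Ω, ENNReal.ofReal (K p * |w p.2| ^ γ * |w p.1| ^ 2)) = 0 →
      ∀ᵐ x, x ∈ Ω → w x = 0) :
    ∀ x ∈ Ω, ∀ ε > (0 : ℝ),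
      0 < volume ((Metric.ball x ε ×ˢ Metric.ball x ε) ∩
        {p : EuclideanSpace ℝ (Fin N) × EuclideanSpace ℝ (Fin N) |
          p.1 ∈ Ω ∧ p.2 ∈ Ω ∧ 0 < K p}) := by
  intro x hx ε hε
  set T := Metric.ball x ε ∩ Ω
  have hTo : IsOpen T := Metric.isOpen_ball.inter hΩo
  refine pos_iff_ne_zero.2 fun hnull => ?_
  have hTK : T ×ˢ T ∩ {p | 0 < K p} ⊆ (Metric.ball x ε ×ˢ Metric.ball x ε) ∩
      {p | p.1 ∈ Ω ∧ p.2 ∈ Ω ∧ 0 < K p} :=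
    fun p ⟨⟨h1, h2⟩, hK⟩ => ⟨⟨h1.1, h2.1⟩, h1.2, h2.2, hK⟩
  have hint : ∫⁻ p in Ω ×ˢ Ω,
      ENNReal.ofReal (K p * |T.indicator 1 p.2| ^ γ * |T.indicator 1 p.1| ^ 2) = 0 :=
    setLIntegral_eq_zero_of_measure_support_eq_zero <| measure_mono_null
      ((support_ofReal_mul_abs_indicator_rpow_subset hγ.ne' K T).trans hTK) hnull
  have hT0 : volume T = 0 := measure_eq_zero_of_ae_indicator_eq_zero Set.inter_subset_right
    (hvan _ (measurable_one.indicator hTo.measurableSet) hint)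
  exact (hTo.measure_pos volume ⟨x, Metric.mem_ball_self hε, hx⟩).ne' hT0

/-- If the vanishing of the double integral
`∫_{Ω×Ω} K(x,y)|w(y)|^γ |w(x)|² d(x,y)` for a measurable `w` always forces `w = 0` a.e. on `Ω`,
then every product of balls `B_ε(x) × B_ε(x)` (with `x ∈ Ω`, `ε > 0`) meets
`K₊ = {(x,y) ∈ Ω × Ω : K(x,y) > 0}` in a set of positive measure; in particular condition (K₂)
holds. -/
theorem stmt6 (N : ℕ) (hN : 1 ≤ N) (Ω : Set (EuclideanSpace ℝ (Fin N)))
    (hΩo : IsOpen Ω) (hΩne : Ω.Nonempty) (γ : ℝ) (hγ : 0 < γ)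
    (K : EuclideanSpace ℝ (Fin N) × EuclideanSpace ℝ (Fin N) → ℝ)
    (hKm : Measurable K)
    (hK0 : ∀ᵐ p ∂(volume.restrict (Ω ×ˢ Ω)), 0 ≤ K p)
    (hvan : ∀ w : EuclideanSpace ℝ (Fin N) → ℝ, Measurable w →
      (∫⁻ p in Ω ×ˢ Ω, ENNReal.ofReal (K p * |w p.2| ^ γ * |w p.1| ^ 2)) = 0 →
      ∀ᵐ x, x ∈ Ω → w x = 0) :
    ∀ x ∈ Ω, ∀ ε > (0 : ℝ),
      0 < volume ((Metric.ball x ε ×ˢ Metric.ball x ε) ∩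
        {p : EuclideanSpace ℝ (Fin N) × EuclideanSpace ℝ (Fin N) |
          p.1 ∈ Ω ∧ p.2 ∈ Ω ∧ 0 < K p}) :=
  stmt6_general N Ω hΩo γ hγ K hvan
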